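/- If (L, irr(L)) is a minimally generated lattice with no parallels, then the rank generating function of its minor poset satisfies F(M(L,irr(L)); q) = 1 + q·F(L*; 1+q), where L* is the dual (order-reversed) lattice of L and F(L*;·) its rank generating function. -/

import Mathlib

open Finset

/-- A generator-enriched lattice datum inside an ambient lattice `L`:
a minimal element `z` together with a finite generating set of elements
strictly above `z`. The underlying set of elements consists of all joins
of `z` with subsets of the generating set. -/
structure GEL (L : Type*) [Lattice L] [DecidableEq L] where
  z : L
  gens : Finset L
  lt_gens : ∀ g ∈ gens, z < g

namespace GEL

variable {L K : Type*} [Lattice L] [OrderBot L] [DecidableEq L]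

/-- The underlying set of elements of a generator enriched lattice. -/
def carrier (M : GEL L) : Finset L :=
  M.gens.powerset.image fun X => X.sup id ⊔ M.z

/-- Deletion of a set of generators. -/
def delete (M : GEL L) (I : Finset L) : GEL L :=
  ⟨M.z, M.gens \ I, fun g hg => M.lt_gens g (Finset.mem_sdiff.mp hg).1⟩

/-- Restriction to a set of generators. -/
def restrict (M : GEL L) (I : Finset L) : GEL L :=
  M.delete (M.gens \ I)

/-- Contraction by a set of generators. -/
def contract (M : GEL L) (I : Finset L) : GEL L :=
  ⟨I.sup id ⊔ M.z,
   (M.gens.image fun g => g ⊔ (I.sup id ⊔ M.z)).erase (I.sup id ⊔ M.z),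
   fun g hg => by
     obtain ⟨hne, hg'⟩ := Finset.mem_erase.mp hg
     obtain ⟨h, -, rfl⟩ := Finset.mem_image.mp hg'
     exact lt_of_le_of_ne le_sup_right (Ne.symm hne)⟩

open Classical in
/-- Contraction by an element: contract by all generators below it. -/
noncomputable def contractEl (M : GEL L) (ℓ : L) : GEL L :=
  M.contract (M.gens.filter fun g => g ≤ ℓ)

/-- A single deletion or contraction step. -/
def Step (M N : GEL L) : Prop :=
  ∃ I ⊆ M.gens, N = M.delete I ∨ N = M.contract I

/-- `Minor M N` : `N` is a minor of `M`, i.e. obtained from `M` by a finite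
sequence of deletions and contractions. -/
def Minor (M N : GEL L) : Prop :=
  Relation.ReflTransGen Step M N

/-- The generator enriched lattice on a lattice with `⊥`, with the given generating set. -/
def ofGens (G : Finset L) (hG : ∀ g ∈ G, (⊥ : L) < g) : GEL L :=
  ⟨⊥, G, hG⟩

/-- The underlying type of the minor poset of `T`: all minors of `T`
together with an adjoined minimum `none`. -/
abbrev MP (T : GEL L) := Option {M : GEL L // T.Minor M}

/-- The order relation of the minor poset. -/
def mple (T : GEL L) : MP T → MP T → Prop
  | none, _ => True
  | some _, none => False
  | some A, some B => B.1.Minor A.1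

/-- The rank function of the minor poset. -/
def mrank (T : GEL L) : MP T → ℕ
  | none => 0
  | some A => A.1.gens.card + 1

/-- A parallel: an element `ℓ` and distinct generators `g, h` with
`g ⊔ ℓ = h ⊔ ℓ ≠ ℓ`. -/
def HasParallel (M : GEL L) : Prop :=
  ∃ ℓ ∈ M.carrier, ∃ g ∈ M.gens, ∃ h ∈ M.gens,
    g ≠ h ∧ g ⊔ ℓ = h ⊔ ℓ ∧ g ⊔ ℓ ≠ ℓ

/-- Isomorphism of generator enriched lattices: a join-preserving bijection of the
underlying sets carrying the generating set onto the generating set. -/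
def GIso [Lattice K] [OrderBot K] [DecidableEq K] (M : GEL L) (N : GEL K) : Prop :=
  ∃ f : L → K, Set.BijOn f ↑M.carrier ↑N.carrier ∧
    (∀ a ∈ M.carrier, ∀ b ∈ M.carrier, f (a ⊔ b) = f a ⊔ f b) ∧
    f '' ↑M.gens = ↑N.gens

open Classical in
/-- The image generator enriched lattice `⟨f(I) | f(z)⟩` of a strong map. -/
noncomputable def map [Lattice K] [DecidableEq K] (f : L → K) (M : GEL L) : GEL K :=
  ⟨f M.z, (M.gens.image f).filter fun y => f M.z < y,
   fun g hg => (Finset.mem_filter.mp hg).2⟩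

/-- `T` lifts join irreducibles: for every `ℓ` and generator `g` with `g ≰ ℓ`,
the element `g ⊔ ℓ` is join irreducible in the interval `[ℓ, ⊤]`. -/
def LiftsJI (T : GEL L) : Prop :=
  ∀ ℓ : L, ∀ g ∈ T.gens, ¬ g ≤ ℓ →
    ∀ a b : L, ℓ ≤ a → ℓ ≤ b → g ⊔ ℓ = a ⊔ b → g ⊔ ℓ = a ∨ g ⊔ ℓ = b

end GEL

/-!
Every minor of `T` arises by contracting to its bottom `ℓ` and then deleting, so the minors
with bottom `ℓ` and `r` generators are the `r`-subsets of the generating set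
`{g ⊔ ℓ | g ≰ ℓ}` of `T / ℓ`. Without parallels, `g ↦ g ⊔ ℓ` is injective on the generators
not below `ℓ`, so this set has the corank of `ℓ` as size. Hence the minor poset has
`∑ ℓ, (corank ℓ).choose r` elements of rank `r + 1`, which is the coefficient of `q ^ (r + 1)`
in `q · F(L*; 1 + q)`.
-/

namespace GEL

variable {L : Type*} [Lattice L] [DecidableEq L]

theorem ext {M N : GEL L} (hz : M.z = N.z) (hg : M.gens = N.gens) : M = N := by
  cases M; cases N; simp_all

/-- The generating set of the contraction `T / ℓ`. -/
def contractGens (T : GEL L) (ℓ : L) : Finset L :=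
  (T.gens.image (· ⊔ ℓ)).erase ℓ

theorem lt_of_mem_contractGens {T : GEL L} {ℓ g : L} (hg : g ∈ T.contractGens ℓ) : ℓ < g := by
  obtain ⟨hne, hg'⟩ := mem_erase.mp hg
  obtain ⟨h, -, rfl⟩ := mem_image.mp hg'
  exact lt_of_le_of_ne le_sup_right (Ne.symm hne)

theorem gens_subset_contractGens_z (T : GEL L) : T.gens ⊆ T.contractGens T.z := fun g hg =>
  mem_erase.mpr ⟨(T.lt_gens g hg).ne', mem_image.mpr ⟨g, hg, sup_eq_left.mpr (T.lt_gens g hg).le⟩⟩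

variable [OrderBot L]

theorem contract_gens (T : GEL L) (I : Finset L) :
    (T.contract I).gens = T.contractGens (T.contract I).z :=
  rfl

theorem Minor.gens_subset {T N : GEL L} (h : T.Minor N) : N.gens ⊆ T.contractGens N.z := by
  induction h with
  | refl => exact T.gens_subset_contractGens_z
  | @tail M N _ hstep ih =>
    obtain ⟨I, -, rfl | rfl⟩ := hstep
    · exact sdiff_subset.trans ih
    · intro x hx
      obtain ⟨hne, hx'⟩ := mem_erase.mp hx
      obtain ⟨n, hn, rfl⟩ := mem_image.mp hx'
      obtain ⟨-, hn'⟩ := mem_erase.mp (ih hn)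
      obtain ⟨g, hg, rfl⟩ := mem_image.mp hn'
      refine mem_erase.mpr ⟨hne, mem_image.mpr ⟨g, hg, ?_⟩⟩
      change g ⊔ (I.sup id ⊔ M.z) = g ⊔ M.z ⊔ (I.sup id ⊔ M.z)
      rw [sup_assoc, sup_eq_right.mpr le_sup_right]

theorem minor_of_gens_subset {T N : GEL L} (hz : N.z ∈ T.carrier)
    (h : N.gens ⊆ T.contractGens N.z) : T.Minor N := by
  obtain ⟨X, hX, hXz⟩ := mem_image.mp hz
  have hcontract : (T.contract X).z = N.z := hXz
  have hdelete : (T.contract X).delete ((T.contract X).gens \ N.gens) = N := by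
    refine GEL.ext hcontract ?_
    change (T.contract X).gens \ ((T.contract X).gens \ N.gens) = N.gens
    rw [contract_gens, hcontract, Finset.sdiff_sdiff_eq_self h]
  exact .head ⟨X, mem_powerset.mp hX, .inr rfl⟩ (.single ⟨_, sdiff_subset, .inl hdelete.symm⟩)

theorem minor_iff (T : GEL L) (hcar : ∀ ℓ : L, ℓ ∈ T.carrier) (N : GEL L) :
    T.Minor N ↔ N.gens ⊆ T.contractGens N.z :=
  ⟨Minor.gens_subset, minor_of_gens_subset (hcar N.z)⟩

theorem card_contractGens [DecidableRel ((· ≤ ·) : L → L → Prop)] {T : GEL L}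
    (hnp : ¬ T.HasParallel) {ℓ : L} (hℓ : ℓ ∈ T.carrier) :
    (T.contractGens ℓ).card = T.gens.card - (T.gens.filter fun i => i ≤ ℓ).card := by
  have himage : T.contractGens ℓ = (T.gens.filter fun i => ¬ i ≤ ℓ).image (· ⊔ ℓ) := by
    ext x
    simp only [contractGens, mem_erase, mem_image, mem_filter]
    constructor
    · rintro ⟨hne, g, hg, rfl⟩
      exact ⟨g, ⟨hg, fun hle => hne (sup_eq_right.mpr hle)⟩, rfl⟩
    · rintro ⟨g, ⟨hg, hle⟩, rfl⟩
      exact ⟨fun h => hle (sup_eq_right.mp h), g, hg, rfl⟩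
  have hinj : Set.InjOn (· ⊔ ℓ) ↑(T.gens.filter fun i => ¬ i ≤ ℓ) := by
    intro g hg h hh heq
    by_contra hne
    obtain ⟨hg, hgℓ⟩ := mem_filter.mp (mem_coe.mp hg)
    obtain ⟨hh, -⟩ := mem_filter.mp (mem_coe.mp hh)
    exact hnp ⟨ℓ, hℓ, g, hg, h, hh, hne, heq, fun h0 => hgℓ (sup_eq_right.mp h0)⟩
  rw [himage, card_image_of_injOn hinj, filter_not, card_sdiff_of_subset (filter_subset _ _)]

theorem card_mrank_eq_zero (T : GEL L) : Nat.card {p : MP T // mrank T p = 0} = 1 := by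
  have huniq (p : {p : MP T // mrank T p = 0}) : p = ⟨none, rfl⟩ := by
    obtain ⟨_ | A, h⟩ := p
    · rfl
    · exact absurd h (Nat.succ_ne_zero _)
  exact Nat.card_eq_one_iff_unique.mpr ⟨⟨fun p q => (huniq p).trans (huniq q).symm⟩, ⟨⟨none, rfl⟩⟩⟩

def mrankSuccEquiv (T : GEL L) (r : ℕ) :
    {p : MP T // mrank T p = r + 1} ≃ {M : GEL L // T.Minor M ∧ M.gens.card = r} where
  toFun
    | ⟨some A, h⟩ => ⟨A.1, A.2, by simpa [mrank] using h⟩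
    | ⟨none, h⟩ => absurd h (by simp [mrank])
  invFun M := ⟨some ⟨M.1, M.2.1⟩, by simp [mrank, M.2.2]⟩
  left_inv := by
    rintro ⟨_ | A, h⟩
    · simp [mrank] at h
    · rfl
  right_inv _ := rfl

theorem card_minors_with_gens_card [Fintype L] (T : GEL L) (hcar : ∀ ℓ : L, ℓ ∈ T.carrier) (r : ℕ) :
    Nat.card {M : GEL L // T.Minor M ∧ M.gens.card = r} =
      ∑ ℓ : L, (T.contractGens ℓ).card.choose r := by
  let s : Finset (Σ _ : L, Finset L) := univ.sigma fun ℓ => (T.contractGens ℓ).powersetCard r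
  let e : {M : GEL L // T.Minor M ∧ M.gens.card = r} ≃ s :=
    { toFun M := ⟨⟨M.1.z, M.1.gens⟩, mem_sigma.mpr ⟨mem_univ _,
        mem_powersetCard.mpr ⟨(T.minor_iff hcar _).mp M.2.1, M.2.2⟩⟩⟩
      invFun x :=
        have hx := mem_powersetCard.mp (mem_sigma.mp x.2).2
        ⟨⟨x.1.1, x.1.2, fun _ hg => lt_of_mem_contractGens (hx.1 hg)⟩,
          (T.minor_iff hcar _).mpr hx.1, hx.2⟩
      left_inv _ := rfl
      right_inv _ := rfl }
  rw [Nat.card_congr e, Nat.card_eq_finsetCard, card_sigma]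
  exact sum_congr rfl fun ℓ _ => card_powersetCard r _

end GEL

open Polynomial in
theorem Polynomial.coeff_one_add_X_mul_sum_one_add_X_pow {R ι : Type*} [CommSemiring R]
    (s : Finset ι) (f : ι → ℕ) (r : ℕ) :
    (1 + X * ∑ i ∈ s, (1 + X : R[X]) ^ f i).coeff (r + 1) = ∑ i ∈ s, ((f i).choose r : R) := by
  simp [coeff_X_mul, finsetSum_coeff, coeff_one_add_X_pow, coeff_one]

theorem minorPoset_rank_gen_function_no_parallels_general {L : Type*} [Lattice L]
    [OrderBot L] [DecidableEq L] [Fintype L]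
    [DecidableRel ((· ≤ ·) : L → L → Prop)]
    (T : GEL L) (hcar : ∀ ℓ : L, ℓ ∈ T.carrier)
    (hnp : ¬ T.HasParallel) :
    ∀ k : ℕ,
      (Nat.card {p : GEL.MP T // GEL.mrank T p = k} : ℤ) =
        ((1 + Polynomial.X *
            ∑ ℓ : L, (1 + Polynomial.X : Polynomial ℤ) ^
              (T.gens.card - (T.gens.filter fun i => i ≤ ℓ).card)).coeff k) := by
  rintro (_ | r)
  · simp [GEL.card_mrank_eq_zero, Polynomial.mul_coeff_zero]
  · rw [Nat.card_congr (GEL.mrankSuccEquiv T r), GEL.card_minors_with_gens_card T hcar,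
      Polynomial.coeff_one_add_X_mul_sum_one_add_X_pow]
    push_cast
    simp only [GEL.card_contractGens hnp (hcar _)]

/-- For a minimally generated lattice `(L, irr L)` with no parallels, the rank
generating function of the minor poset satisfies
`F(M(L, irr L); q) = 1 + q·F(L*; 1+q)`, where the dual lattice `L*` is graded
with rank equal to the corank in `L`; stated coefficientwise. -/
theorem minorPoset_rank_gen_function_no_parallels {L : Type*} [Lattice L]
    [OrderBot L] [DecidableEq L] [Fintype L]
    [DecidableRel ((· ≤ ·) : L → L → Prop)]
    (T : GEL L) (hcar : ∀ ℓ : L, ℓ ∈ T.carrier)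
    (hmin : ∀ g : L, g ∈ T.gens ↔
      (g ≠ ⊥ ∧ ∀ a b : L, g = a ⊔ b → g = a ∨ g = b))
    (hnp : ¬ T.HasParallel) :
    ∀ k : ℕ,
      (Nat.card {p : GEL.MP T // GEL.mrank T p = k} : ℤ) =
        ((1 + Polynomial.X *
            ∑ ℓ : L, (1 + Polynomial.X : Polynomial ℤ) ^
              (T.gens.card - (T.gens.filter fun i => i ≤ ℓ).card)).coeff k) :=
  minorPoset_rank_gen_function_no_parallels_general T hcar hnp
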